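/- In the randomly oriented complete binary tree T_n of height n with parameter p ∈ [0,1], for every vertex v of level k = ℓ(v), P(X_v) = ρ_k(p) + (1 − ρ_k(p))·α^{(n)}_k(p), where α^{(n)}_k(p) = (1−p)·p·Σ_{i=0}^{n−1−k} (1−p)^i · ρ_{k+i}(p) · ∏_{j=0}^{i−1} (1 − p·ρ_{k+j}(p)). -/

import Mathlib

open MeasureTheory ProbabilityTheory Finset
open scoped Classical

/-- Vertices of the complete binary tree of height `n`: words over `{0,1}`
of length at most `n`.  The empty word is the root; words of length `n`
are the leaves; the level of `v` is `n - |v|`. -/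
def Vtx (n : ℕ) : Type := {l : List Bool // l.length ≤ n}

/-- Edges of the complete binary tree of height `n`, indexed by the nonempty
words of length at most `n`: the edge joins such a word to its predecessor
(the word obtained by deleting the last letter). -/
def Edg (n : ℕ) : Type := {l : List Bool // l ≠ [] ∧ l.length ≤ n}

noncomputable instance (n : ℕ) : Fintype (Vtx n) := by
  apply Fintype.ofInjective (fun v : Vtx n => fun i : Fin (n + 1) => v.1[i.1]?)
  intro u v h
  apply Subtype.ext
  apply List.ext_getElem?
  intro m
  by_cases hm : m < n + 1
  · exact congrFun h ⟨m, hm⟩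
  · have hu := u.2
    have hv := v.2
    rw [List.getElem?_eq_none_iff.2, List.getElem?_eq_none_iff.2] <;> omega

noncomputable instance (n : ℕ) : Fintype (Edg n) := by
  apply Fintype.ofInjective (fun v : Edg n => fun i : Fin (n + 1) => v.1[i.1]?)
  intro u v h
  apply Subtype.ext
  apply List.ext_getElem?
  intro m
  by_cases hm : m < n + 1
  · exact congrFun h ⟨m, hm⟩
  · have hu := u.2.2
    have hv := v.2.2
    rw [List.getElem?_eq_none_iff.2, List.getElem?_eq_none_iff.2] <;> omega

/-- The Bernoulli measure on `Bool`: `true` has probability `p`,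
`false` has probability `1 - p`. -/
noncomputable def bern (p : ℝ) : Measure Bool :=
  (ENNReal.ofReal p) • Measure.dirac true + (ENNReal.ofReal (1 - p)) • Measure.dirac false

instance (p : ℝ) : IsFiniteMeasure (bern p) := by
  constructor
  simp only [bern, Measure.add_apply, Measure.smul_apply, smul_eq_mul]
  exact ENNReal.add_lt_top.mpr
    ⟨ENNReal.mul_lt_top ENNReal.ofReal_lt_top (by simp),
     ENNReal.mul_lt_top ENNReal.ofReal_lt_top (by simp)⟩

/-- The random orientation measure on the complete binary tree of height `n`:
each edge is oriented towards the root (coordinate `true`) with probability `p`,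
independently of the other edges. -/
noncomputable def treeMeasure (n : ℕ) (p : ℝ) : Measure (Edg n → Bool) :=
  Measure.pi fun _ => bern p

/-- One oriented step in the configuration `ω`: `a → b` if the tree edge between
`a` and `b` is oriented from `a` to `b` (coordinate `true` means oriented towards
the root, i.e. towards the shorter word). -/
def TStep {n : ℕ} (ω : Edg n → Bool) (a b : Vtx n) : Prop :=
  ∃ e : Edg n, (ω e = true ∧ e.1 = a.1 ∧ b.1 = e.1.dropLast) ∨
    (ω e = false ∧ e.1 = b.1 ∧ a.1 = e.1.dropLast)

/-- `X v`: the event that water, pumped into the leaves, reaches `v`, i.e. there is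
a directed path from some leaf to `v`. -/
def Xwet {n : ℕ} (v : Vtx n) : Set (Edg n → Bool) :=
  {ω | ∃ w : Vtx n, w.1.length = n ∧ Relation.ReflTransGen (TStep ω) w v}

/-- `Y v`: the event that `v` gets wet in downwards percolation: there is a leaf `w`
above `v` such that every edge on the path from `w` down to `v` is oriented
towards the root. -/
def Ydown {n : ℕ} (v : Vtx n) : Set (Edg n → Bool) :=
  {ω | ∃ w : List Bool, w.length = n ∧ v.1 <+: w ∧
    ∀ u : Edg n, u.1 <+: w → v.1.length < u.1.length → ω u = true}

/-- The recursion `ρ₀ = 1`, `ρ_{k+1} = 2 p ρ_k - (p ρ_k)²`. -/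
noncomputable def rho (p : ℝ) : ℕ → ℝ
  | 0 => 1
  | k + 1 => 2 * p * rho p k - (p * rho p k) ^ 2

/-- `α^{(n)}_k`, the probability that water reaches a level-`k` vertex from below. -/
noncomputable def alpha (p : ℝ) (n k : ℕ) : ℝ :=
  (1 - p) * p * ∑ i ∈ Finset.range (n - k),
    (1 - p) ^ i * rho p (k + i) * ∏ j ∈ Finset.range i, (1 - p * rho p (k + j))

/-- The size of the percolation cluster `C_n` (leaves excluded). -/
noncomputable def clusterSize (n : ℕ) (ω : Edg n → Bool) : ℕ :=
  Nat.card {v : Vtx n // v.1.length < n ∧ ω ∈ Xwet v}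

/-- The size of the downwards percolation cluster `C↓_n` (leaves excluded). -/
noncomputable def downClusterSize (n : ℕ) (ω : Edg n → Bool) : ℕ :=
  Nat.card {v : Vtx n // v.1.length < n ∧ ω ∈ Ydown v}

/-- The maximum level reached by water in downwards percolation. -/
noncomputable def maxLevel (n : ℕ) (ω : Edg n → Bool) : ℕ :=
  sSup ({0} ∪ {k | ∃ v : Vtx n, ω ∈ Ydown v ∧ n - v.1.length = k})

/-- The root of the tree. -/
def root (n : ℕ) : Vtx n := ⟨[], by simp⟩

section Infra

variable {n : ℕ} {p : ℝ}

lemma bern_singleton (hp0 : 0 ≤ p) (hp1 : p ≤ 1) (b : Bool) :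
    bern p {b} = ENNReal.ofReal (if b then p else 1 - p) := by
  cases b <;>
  simp [bern, Measure.dirac_apply]

lemma bern_univ (hp0 : 0 ≤ p) (hp1 : p ≤ 1) : bern p Set.univ = 1 := by
  simp only [bern, Measure.add_apply, Measure.smul_apply, Measure.dirac_apply, smul_eq_mul]
  simp only [Set.mem_univ, Set.indicator_of_mem, Pi.one_apply, mul_one]
  rw [← ENNReal.ofReal_add hp0 (by linarith)]
  norm_num

lemma bern_prob (hp0 : 0 ≤ p) (hp1 : p ≤ 1) : IsProbabilityMeasure (bern p) :=
  ⟨bern_univ hp0 hp1⟩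

instance : Countable (Edg n) := Finite.to_countable

lemma measSet {α : Type*} [Countable α] [MeasurableSpace α] [MeasurableSingletonClass α]
    (S : Set α) : MeasurableSet S := (Set.to_countable S).measurableSet

lemma treeMeasure_prob (hp0 : 0 ≤ p) (hp1 : p ≤ 1) : IsProbabilityMeasure (treeMeasure n p) := by
  haveI := bern_prob hp0 hp1
  exact MeasureTheory.Measure.pi.instIsProbabilityMeasure _

/-- `A` depends only on the coordinates in `S`. -/
def DepOn {n : ℕ} (A : Set (Edg n → Bool)) (S : Set (Edg n)) : Prop :=
  ∀ ⦃ω ω' : Edg n → Bool⦄, (∀ e ∈ S, ω e = ω' e) → ω ∈ A → ω' ∈ A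

lemma DepOn.mono {A : Set (Edg n → Bool)} {S S' : Set (Edg n)} (h : DepOn A S)
    (hS : S ⊆ S') : DepOn A S' := fun ω ω' hag => h (fun e he => hag e (hS he))

lemma DepOn.compl {A : Set (Edg n → Bool)} {S : Set (Edg n)} (h : DepOn A S) :
    DepOn Aᶜ S := fun ω ω' hag hω hmem =>
  hω (h (fun e he => (hag e he).symm) hmem)

lemma DepOn.inter {A B : Set (Edg n → Bool)} {S T : Set (Edg n)} (hA : DepOn A S)
    (hB : DepOn B T) : DepOn (A ∩ B) (S ∪ T) := fun ω ω' hag hω =>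
  ⟨hA (fun e he => hag e (Set.mem_union_left _ he)) hω.1,
   hB (fun e he => hag e (Set.mem_union_right _ he)) hω.2⟩

/-- The fundamental product rule: events depending on disjoint coordinate sets
multiply. -/
lemma prodRule (hp0 : 0 ≤ p) (hp1 : p ≤ 1) {A B : Set (Edg n → Bool)} {S T : Set (Edg n)}
    (hA : DepOn A S) (hB : DepOn B T) (hST : Disjoint S T) :
    treeMeasure n p (A ∩ B) = treeMeasure n p A * treeMeasure n p B := by
  haveI := bern_prob hp0 hp1
  set q : Edg n → Prop := fun e => e ∈ S with hq
  let E := MeasurableEquiv.piEquivPiSubtypeProd (fun _ : Edg n => Bool) q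
  let resS : (Edg n → Bool) → ({e // q e} → Bool) := fun ω i => ω i
  let resT : (Edg n → Bool) → ({e // ¬ q e} → Bool) := fun ω i => ω i
  have hE : ∀ ω, E ω = (resS ω, resT ω) := fun ω => rfl
  have hBc : DepOn B {e | ¬ q e} := hB.mono (fun e he hS => (Set.disjoint_left.1 hST hS) he)
  have hAeq : ∀ ω : Edg n → Bool, ω ∈ A ↔ resS ω ∈ resS '' A := by
    intro ω
    constructor
    · exact fun h => ⟨ω, h, rfl⟩
    · rintro ⟨ω₀, h₀, hres⟩
      exact hA (fun e he => congrFun hres ⟨e, he⟩) h₀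
  have hBeq : ∀ ω : Edg n → Bool, ω ∈ B ↔ resT ω ∈ resT '' B := by
    intro ω
    constructor
    · exact fun h => ⟨ω, h, rfl⟩
    · rintro ⟨ω₀, h₀, hres⟩
      exact hBc (fun e he => congrFun hres ⟨e, he⟩) h₀
  have key : ∀ (U : Set ({e // q e} → Bool)) (V : Set ({e // ¬ q e} → Bool)),
      treeMeasure n p (E ⁻¹' (U ×ˢ V)) =
        (Measure.pi fun _ : {e // q e} => bern p) U *
        (Measure.pi fun _ : {e // ¬ q e} => bern p) V := by
    intro U V
    have hmp := MeasureTheory.measurePreserving_piEquivPiSubtypeProd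
      (fun _ : Edg n => bern p) q
    rw [show treeMeasure n p = Measure.pi (fun _ : Edg n => bern p) from rfl,
      hmp.measure_preimage_equiv, Measure.prod_prod]
  have hA' : A = E ⁻¹' ((resS '' A) ×ˢ Set.univ) := by
    ext ω; simp [hE, Set.mem_prod, ← hAeq ω]
  have hB' : B = E ⁻¹' (Set.univ ×ˢ (resT '' B)) := by
    ext ω; simp [hE, Set.mem_prod, ← hBeq ω]
  have hAB : A ∩ B = E ⁻¹' ((resS '' A) ×ˢ (resT '' B)) := by
    ext ω; simp [hE, Set.mem_prod, ← hAeq ω, ← hBeq ω]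
  have h1 : (Measure.pi fun _ : {e // q e} => bern p) Set.univ = 1 := measure_univ
  have h2 : (Measure.pi fun _ : {e // ¬ q e} => bern p) Set.univ = 1 := measure_univ
  have mA : treeMeasure n p A = (Measure.pi fun _ : {e // q e} => bern p) (resS '' A) := by
    conv_lhs => rw [hA']
    rw [key, h2, mul_one]
  have mB : treeMeasure n p B = (Measure.pi fun _ : {e // ¬ q e} => bern p) (resT '' B) := by
    conv_lhs => rw [hB']
    rw [key, h1, one_mul]
  conv_lhs => rw [hAB]
  rw [key, ← mA, ← mB]

end Infra
section Comb

variable {n : ℕ}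

lemma take_succ_getD (l : List Bool) (m : ℕ) (h : m < l.length) :
    l.take (m+1) = l.take m ++ [l.getD m false] := by
  rw [List.take_succ]
  congr 1
  rw [List.getElem?_eq_getElem h]
  simp [List.getD_eq_getElem?_getD, List.getElem?_eq_getElem h]

lemma prefix_trichotomy {l₁ l₂ w : List Bool} (h1 : l₁ <+: w) (h2 : l₂ <+: w)
    (h : l₁.length ≤ l₂.length) : l₁ <+: l₂ :=
  List.prefix_of_prefix_length_le h1 h2 h

lemma prefix_eq_of_length {l₁ l₂ w : List Bool} (h1 : l₁ <+: w) (h2 : l₂ <+: w)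
    (h : l₁.length = l₂.length) : l₁ = l₂ :=
  (prefix_trichotomy h1 h2 h.le).eq_of_length h

lemma prefix_dropLast {l w : List Bool} (h : l <+: w) (hl : l.length < w.length) :
    l <+: w.dropLast := by
  rw [List.dropLast_eq_take, List.prefix_iff_eq_take.1 h]
  have h2 : List.take l.length w = List.take l.length (List.take (w.length - 1) w) := by
    rw [List.take_take]; congr 1; omega
  rw [h2]; exact List.take_prefix _ _

lemma tstep_cases {ω : Edg n → Bool} {a b : Vtx n} (h : TStep ω a b) :
    (∃ e : Edg n, ω e = true ∧ e.1 = a.1 ∧ b.1 = a.1.dropLast) ∨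
    (∃ e : Edg n, ω e = false ∧ e.1 = b.1 ∧ a.1 = b.1.dropLast) := by
  obtain ⟨e, h | h⟩ := h
  · exact Or.inl ⟨e, h.1, h.2.1, by rw [h.2.2, h.2.1]⟩
  · exact Or.inr ⟨e, h.1, h.2.1, by rw [h.2.2, h.2.1]⟩

/-- Structure of directed paths: any directed path from `w` to `v` goes up from `w`
to a common ancestor `u` along `true` edges and then down to `v` along `false` edges. -/
lemma reach_struct {ω : Edg n → Bool} {w v : Vtx n}
    (h : Relation.ReflTransGen (TStep ω) w v) :
    ∃ u : List Bool, u <+: w.1 ∧ u <+: v.1 ∧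
      (∀ e : Edg n, e.1 <+: w.1 → u.length < e.1.length → ω e = true) ∧
      (∀ e : Edg n, e.1 <+: v.1 → u.length < e.1.length → ω e = false) := by
  induction h with
  | refl =>
      exact ⟨w.1, List.prefix_refl _, List.prefix_refl _,
        fun e he hl => absurd he.length_le (by omega),
        fun e he hl => absurd he.length_le (by omega)⟩
  | @tail b c hwb hbc ih =>
      obtain ⟨u, huw, hub, htrue, hfalse⟩ := ih
      rcases tstep_cases hbc with ⟨e, he, hea, hcd⟩ | ⟨e, he, hec, hbd⟩
      · -- upward step : c.1 = b.1.dropLast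
        have hu : u = b.1 := by
          by_contra hne
          have hlt : u.length < b.1.length :=
            lt_of_le_of_ne hub.length_le (fun hl => hne (hub.eq_of_length hl))
          have := hfalse e (hea ▸ List.prefix_refl _) (by rw [hea]; exact hlt)
          rw [he] at this; simp at this
        have hbne : b.1 ≠ [] := hea ▸ e.2.1
        have hul : u.length = b.1.length := by rw [hu]
        have hblen : 0 < b.1.length := List.length_pos_iff.2 hbne
        have hclen : c.1.length = b.1.length - 1 := by
          rw [hcd, List.length_dropLast]
        refine ⟨c.1, ?_, List.prefix_refl _, ?_, ?_⟩
        · calc c.1 <+: b.1 := hcd ▸ List.dropLast_prefix _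
            _ <+: w.1 := hu ▸ huw
        · intro e' he' hl
          rcases Nat.lt_or_ge u.length e'.1.length with h' | h'
          · exact htrue e' he' h'
          · have hlen : e'.1.length = b.1.length := by omega
            have : e'.1 = b.1 := prefix_eq_of_length he' (hu ▸ huw) (by omega)
            have : e' = e := Subtype.ext (by rw [this, hea])
            rw [this]; exact he
        · intro e' he' hl
          exact absurd he'.length_le (by omega)
      · -- downward step : b.1 = c.1.dropLast
        have hcne : c.1 ≠ [] := hec ▸ e.2.1
        have hclen : 0 < c.1.length := List.length_pos_iff.2 hcne
        have hblen : b.1.length = c.1.length - 1 := by rw [hbd, List.length_dropLast]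
        refine ⟨u, huw, ?_, htrue, ?_⟩
        · calc u <+: b.1 := hub
            _ <+: c.1 := hbd ▸ List.dropLast_prefix _
        · intro e' he' hl
          rcases Nat.lt_or_ge e'.1.length c.1.length with h' | h'
          · refine hfalse e' ?_ hl
            rw [hbd]; exact prefix_dropLast he' h'
          · have : e'.1 = c.1 := prefix_eq_of_length he' (List.prefix_refl _) (by
              have := he'.length_le; omega)
            have : e' = e := Subtype.ext (by rw [this, hec])
            rw [this]; exact he

lemma reach_up (ω : Edg n → Bool) (w : Vtx n) (u : List Bool) (hu : u <+: w.1)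
    (ht : ∀ e : Edg n, e.1 <+: w.1 → u.length < e.1.length → ω e = true) :
    Relation.ReflTransGen (TStep ω) w ⟨u, le_trans hu.length_le w.2⟩ := by
  suffices H : ∀ d (w : Vtx n) (hu : u <+: w.1),
      w.1.length - u.length = d →
      (∀ e : Edg n, e.1 <+: w.1 → u.length < e.1.length → ω e = true) →
      Relation.ReflTransGen (TStep ω) w ⟨u, le_trans hu.length_le w.2⟩ from
    H _ w hu rfl ht
  intro d
  induction d with
  | zero =>
      intro w hu hd _
      have : w = ⟨u, le_trans hu.length_le w.2⟩ :=
        Subtype.ext (hu.eq_of_length (by have := hu.length_le; omega)).symm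
      rw [← this]
  | succ d ih =>
      intro w hu hd ht
      have hlt : u.length < w.1.length := by omega
      have hwne : w.1 ≠ [] := by
        intro h; rw [h] at hlt; simp at hlt
      set w' : Vtx n := ⟨w.1.dropLast, le_trans (List.dropLast_prefix _).length_le w.2⟩
        with hw'
      have hw'len : w'.1.length = w.1.length - 1 := List.length_dropLast
      have hu' : u <+: w'.1 := prefix_dropLast hu hlt
      have step : TStep ω w w' := by
        refine ⟨⟨w.1, hwne, w.2⟩, Or.inl ⟨?_, rfl, rfl⟩⟩
        exact ht _ (List.prefix_refl _) hlt
      have rest := ih w' hu' (by omega)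
        (fun e he hl => ht e (he.trans (List.dropLast_prefix _)) hl)
      exact Relation.ReflTransGen.head step rest

lemma reach_down (ω : Edg n → Bool) (v : Vtx n) (u : List Bool) (hu : u <+: v.1)
    (hf : ∀ e : Edg n, e.1 <+: v.1 → u.length < e.1.length → ω e = false) :
    Relation.ReflTransGen (TStep ω) ⟨u, le_trans hu.length_le v.2⟩ v := by
  suffices H : ∀ d (v : Vtx n) (hu : u <+: v.1),
      v.1.length - u.length = d →
      (∀ e : Edg n, e.1 <+: v.1 → u.length < e.1.length → ω e = false) →
      Relation.ReflTransGen (TStep ω) ⟨u, le_trans hu.length_le v.2⟩ v from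
    H _ v hu rfl hf
  intro d
  induction d with
  | zero =>
      intro v hu hd _
      have : v = ⟨u, le_trans hu.length_le v.2⟩ :=
        Subtype.ext (hu.eq_of_length (by have := hu.length_le; omega)).symm
      rw [← this]
  | succ d ih =>
      intro v hu hd hf
      have hlt : u.length < v.1.length := by omega
      have hvne : v.1 ≠ [] := by
        intro h; rw [h] at hlt; simp at hlt
      set v' : Vtx n := ⟨v.1.dropLast, le_trans (List.dropLast_prefix _).length_le v.2⟩
        with hv'
      have hv'len : v'.1.length = v.1.length - 1 := List.length_dropLast
      have hu' : u <+: v'.1 := prefix_dropLast hu hlt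
      have step : TStep ω v' v := by
        refine ⟨⟨v.1, hvne, v.2⟩, Or.inr ⟨?_, rfl, rfl⟩⟩
        exact hf _ (List.prefix_refl _) hlt
      have rest := ih v' hu' (by omega)
        (fun e he hl => hf e (he.trans (List.dropLast_prefix _)) hl)
      exact Relation.ReflTransGen.tail rest step

end Comb
section Events

variable {n : ℕ}

/-- All path edges above level `m` towards `L` are oriented away from the root. -/
def Fev (n : ℕ) (L : List Bool) (m : ℕ) : Set (Edg n → Bool) :=
  {ω | ∀ e : Edg n, e.1 <+: L → m < e.1.length → ω e = false}

/-- The sibling subtree at height `m` sends water down to the path vertex of length `m`. -/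
def Send (n : ℕ) (L : List Bool) (m : ℕ) : Set (Edg n → Bool) :=
  {ω | ∃ w : List Bool, w.length = n ∧ L.take m <+: w ∧ w.getD m false ≠ L.getD m false ∧
    ∀ e : Edg n, e.1 <+: w → m < e.1.length → ω e = true}

def Gev (n : ℕ) (L : List Bool) (m : ℕ) : Set (Edg n → Bool) :=
  (Fev n L m ∩ Send n L m) ∩ ⋂ j ∈ Finset.Ico (m+1) L.length, (Send n L j)ᶜ

def cF (n : ℕ) (L : List Bool) (m : ℕ) : Set (Edg n) := {e | e.1 <+: L ∧ m < e.1.length}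

/-- the sibling word at height `m`. -/
def sib (L : List Bool) (m : ℕ) : List Bool := L.take m ++ [!L.getD m false]

def cS (n : ℕ) (L : List Bool) (m : ℕ) : Set (Edg n) := {e | sib L m <+: e.1}

def cY (n : ℕ) (L : List Bool) : Set (Edg n) := {e | L <+: e.1 ∧ L ≠ e.1}

lemma sib_length {L : List Bool} {m : ℕ} (hm : m < L.length) : (sib L m).length = m + 1 := by
  simp [sib]; omega

lemma sib_ne_nil {L : List Bool} {m : ℕ} : sib L m ≠ [] := by simp [sib]

lemma getD_eq_of_prefix {l w : List Bool} (h : l <+: w) {i : ℕ} (hi : i < l.length) :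
    w.getD i false = l.getD i false := by
  obtain ⟨t, rfl⟩ := h
  rw [List.getD_append _ _ _ _ hi]

lemma take_eq_of_prefix {l w : List Bool} (h : l <+: w) {m : ℕ} (hm : l.length = m) :
    w.take m = l := by
  rw [← hm, ← List.prefix_iff_eq_take.1 h]

lemma sib_prefix_iff {L w : List Bool} {m : ℕ} (hm : m < L.length) (hw : m < w.length) :
    sib L m <+: w ↔ (L.take m <+: w ∧ w.getD m false ≠ L.getD m false) := by
  have htl : (L.take m).length = m := by rw [List.length_take]; omega
  constructor
  · intro h
    have h1 : L.take m <+: w := by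
      have : L.take m <+: sib L m := ⟨[!L.getD m false], rfl⟩
      exact this.trans h
    refine ⟨h1, ?_⟩
    have h2 : w.getD m false = (sib L m).getD m false := getD_eq_of_prefix h (by rw [sib_length hm]; omega)
    have h3 : (sib L m).getD m false = !L.getD m false := by
      rw [sib, List.getD_append_right _ _ _ _ (by rw [htl])]
      simp [htl]
    rw [h2, h3]
    simp
  · rintro ⟨h1, h2⟩
    have hw1 : w.take m = L.take m := take_eq_of_prefix h1 htl
    have : w.take (m+1) = sib L m := by
      rw [take_succ_getD w m hw, hw1, sib]
      congr 2
      cases hL : L.getD m false <;> cases hw' : w.getD m false <;> simp_all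
    rw [← this]; exact List.take_prefix _ _

lemma sib_not_prefix {L : List Bool} {m : ℕ} (hm : m < L.length) : ¬ sib L m <+: L := by
  intro h
  have := ((sib_prefix_iff hm hm).1 h).2
  exact this rfl

lemma cS_disj {L : List Bool} {i j : ℕ} (hi : i < L.length) (hj : j < L.length)
    (hij : i ≠ j) : Disjoint (cS n L i) (cS n L j) := by
  rw [Set.disjoint_left]
  intro e hei hej
  simp only [cS, Set.mem_setOf_eq] at hei hej
  rcases Nat.lt_or_ge i j with h | h
  · have h1 : sib L i <+: sib L j := prefix_trichotomy hei hej
      (by rw [sib_length hi, sib_length hj]; omega)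
    have h2 : sib L i <+: L.take j := by
      have hx : L.take j <+: sib L j := ⟨[!L.getD j false], rfl⟩
      exact prefix_trichotomy h1 hx
        (by rw [sib_length hi, List.length_take]; omega)
    exact sib_not_prefix hi (h2.trans (List.take_prefix _ _))
  · have hji : j < i := by omega
    have h1 : sib L j <+: sib L i := prefix_trichotomy hej hei
      (by rw [sib_length hi, sib_length hj]; omega)
    have h2 : sib L j <+: L.take i := by
      have hx : L.take i <+: sib L i := ⟨[!L.getD i false], rfl⟩
      exact prefix_trichotomy h1 hx (by rw [sib_length hj, List.length_take]; omega)
    exact sib_not_prefix hj (h2.trans (List.take_prefix _ _))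

lemma cF_cS_disj {L : List Bool} {a j : ℕ} (hj : j < L.length) :
    Disjoint (cF n L a) (cS n L j) := by
  rw [Set.disjoint_left]
  intro e he hej
  simp only [cF, cS, Set.mem_setOf_eq] at he hej
  exact sib_not_prefix hj (hej.trans he.1)

lemma cY_cS_disj {L : List Bool} {j : ℕ} (hj : j < L.length) :
    Disjoint (cY n L) (cS n L j) := by
  rw [Set.disjoint_left]
  intro e hem hej
  simp only [cY, cS, Set.mem_setOf_eq] at hem hej
  obtain ⟨heL, hne⟩ := hem
  have hlen : L.length < e.1.length :=
    lt_of_le_of_ne heL.length_le (fun h => hne (heL.eq_of_length h))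
  have : sib L j <+: L := prefix_trichotomy hej heL (by rw [sib_length hj]; omega)
  exact sib_not_prefix hj this

lemma cY_cF_disj {L : List Bool} {a : ℕ} : Disjoint (cY n L) (cF n L a) := by
  rw [Set.disjoint_left]
  intro e hem hef
  simp only [cY, cF, Set.mem_setOf_eq] at hem hef
  obtain ⟨heL, hne⟩ := hem
  obtain ⟨heF, -⟩ := hef
  have h1 : L.length < e.1.length :=
    lt_of_le_of_ne heL.length_le (fun h => hne (heL.eq_of_length h))
  have h2 := heF.length_le
  omega

lemma fev_depOn {L : List Bool} {m : ℕ} : DepOn (Fev n L m) (cF n L m) :=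
  fun ω ω' hag hω e he hl => by rw [← hag e ⟨he, hl⟩]; exact hω e he hl

lemma ydown_depOn (u : Vtx n) : DepOn (Ydown u) (cY n u.1) := by
  rintro ω ω' hag ⟨w, hwn, huw, ht⟩
  refine ⟨w, hwn, huw, fun e he hl => ?_⟩
  have h1 : u.1 <+: e.1 := prefix_trichotomy huw he (by omega)
  rw [← hag e ⟨h1, fun h => absurd (congrArg List.length h) (by omega)⟩]
  exact ht e he hl

lemma send_depOn {L : List Bool} {m : ℕ} (hm : m < L.length) (hLn : L.length ≤ n) :
    DepOn (Send n L m) (cS n L m) := by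
  rintro ω ω' hag ⟨w, hwn, hpre, hgd, ht⟩
  have hsw : sib L m <+: w := (sib_prefix_iff hm (by rw [hwn]; omega)).2 ⟨hpre, hgd⟩
  refine ⟨w, hwn, hpre, hgd, fun e he hl => ?_⟩
  have hsl : (sib L m).length ≤ m + 1 := (sib_length hm).le
  have : sib L m <+: e.1 := prefix_trichotomy hsw he (by omega)
  rw [← hag e this]
  exact ht e he hl

end Events
section Identities

variable {n : ℕ}

lemma fev_univ {L : List Bool} {m : ℕ} (hm : L.length ≤ m) : Fev n L m = Set.univ := by
  ext ω
  simp only [Fev, Set.mem_setOf_eq, Set.mem_univ, iff_true]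
  intro e he hl
  have := he.length_le
  omega

lemma fev_mono {L : List Bool} {a b : ℕ} (hab : a ≤ b) : Fev n L a ⊆ Fev n L b :=
  fun ω hω e he hl => hω e he (by omega)

/-- `Fev` splits off its lowest edge. -/
lemma fev_split {L : List Bool} {m : ℕ} (hm : m < L.length) (hLn : L.length ≤ n) :
    Fev n L m = {ω : Edg n → Bool |
        ω ⟨L.take (m+1), by
          intro h
          have := congrArg List.length h
          simp only [List.length_take, List.length_nil] at this
          omega,
          le_trans (List.take_prefix _ _).length_le hLn⟩ = false} ∩ Fev n L (m+1) := by
  ext ω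
  simp only [Fev, Set.mem_inter_iff, Set.mem_setOf_eq]
  constructor
  · intro h
    exact ⟨h _ (List.take_prefix _ _) (by rw [List.length_take]; omega),
      fun e he hl => h e he (by omega)⟩
  · rintro ⟨h1, h2⟩ e he hl
    rcases Nat.lt_or_ge (m+1) e.1.length with h' | h'
    · exact h2 e he h'
    · have hlen : e.1.length = m + 1 := by omega
      have : e.1 = L.take (m+1) := by
        rw [List.prefix_iff_eq_take.1 he, hlen]
      have he' : e = ⟨L.take (m+1), by
          intro hh
          have := congrArg List.length hh
          simp only [List.length_take, List.length_nil] at this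
          omega,
          le_trans (List.take_prefix _ _).length_le hLn⟩ := Subtype.ext this
      rw [he']
      exact h1

/-- `Ydown` of a non-leaf splits along its two children. -/
lemma ydown_split (u : Vtx n) (hu : u.1.length < n) (ω : Edg n → Bool) :
    ω ∈ Ydown u ↔ ∃ b : Bool,
      ω ⟨u.1 ++ [b], by simp, by rw [List.length_append, List.length_singleton]; omega⟩ = true ∧
      ω ∈ Ydown ⟨u.1 ++ [b], by rw [List.length_append, List.length_singleton]; omega⟩ := by
  constructor
  · rintro ⟨w, hwn, huw, ht⟩
    have hlt : u.1.length < w.length := by omega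
    set b := w.getD u.1.length false with hb
    have hwt : w.take u.1.length = u.1 := take_eq_of_prefix huw rfl
    have hpre : u.1 ++ [b] <+: w := by
      have : w.take (u.1.length + 1) = u.1 ++ [b] := by
        rw [take_succ_getD w _ hlt, hwt]
      rw [← this]
      exact List.take_prefix _ _
    refine ⟨b, ht _ hpre (by rw [List.length_append, List.length_singleton]; omega),
      w, hwn, hpre, fun e he hl => ?_⟩
    rw [List.length_append, List.length_singleton] at hl
    exact ht e he (by omega)
  · rintro ⟨b, hedge, w, hwn, hpre, ht⟩
    refine ⟨w, hwn, (List.prefix_append _ _).trans hpre, fun e he hl => ?_⟩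
    rcases Nat.lt_or_ge (u.1.length + 1) e.1.length with h' | h'
    · exact ht e he (by rw [List.length_append, List.length_singleton]; omega)
    · have : e.1 = u.1 ++ [b] := prefix_eq_of_length he hpre
        (by rw [List.length_append, List.length_singleton]; omega)
      have he' : e = ⟨u.1 ++ [b], by simp,
          by rw [List.length_append, List.length_singleton]; omega⟩ := Subtype.ext this
      rw [he']
      exact hedge

/-- `Send` as an explicit intersection of an edge event and a `Ydown` event. -/
lemma send_iff {L : List Bool} {m : ℕ} (hm : m < L.length) (hLn : L.length ≤ n)
    (ω : Edg n → Bool) :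
    ω ∈ Send n L m ↔
      (ω ⟨sib L m, sib_ne_nil, by rw [sib_length hm]; omega⟩ = true ∧
       ω ∈ Ydown ⟨sib L m, by rw [sib_length hm]; omega⟩) := by
  constructor
  · rintro ⟨w, hwn, hpre, hgd, ht⟩
    have hsw : sib L m <+: w := (sib_prefix_iff hm (by omega)).2 ⟨hpre, hgd⟩
    refine ⟨ht _ hsw (by rw [sib_length hm]; omega), w, hwn, hsw, fun e he hl => ?_⟩
    rw [sib_length hm] at hl
    exact ht e he (by omega)
  · rintro ⟨hedge, w, hwn, hsw, ht⟩
    obtain ⟨hpre, hgd⟩ := (sib_prefix_iff hm (by omega)).1 hsw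
    refine ⟨w, hwn, hpre, hgd, fun e he hl => ?_⟩
    rcases Nat.lt_or_ge (m+1) e.1.length with h' | h'
    · exact ht e he (by rw [sib_length hm]; omega)
    · have : e.1 = sib L m := prefix_eq_of_length he hsw (by rw [sib_length hm]; omega)
      have he' : e = ⟨sib L m, sib_ne_nil, by rw [sib_length hm]; omega⟩ := Subtype.ext this
      rw [he']
      exact hedge

/-- Under `Fev m`, downward percolation to the path vertex at height `m`
is the same as the sibling sending water. -/
lemma ydown_fev_send {v : Vtx n} {m : ℕ} (hm : m < v.1.length) (ω : Edg n → Bool)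
    (hF : ω ∈ Fev n v.1 m) :
    ω ∈ Ydown ⟨v.1.take m, le_trans (List.take_prefix _ _).length_le v.2⟩ ↔
      ω ∈ Send n v.1 m := by
  have hLn : v.1.length ≤ n := v.2
  have htl : (v.1.take m).length = m := by rw [List.length_take]; omega
  constructor
  · rintro ⟨w, hwn, hpre, ht⟩
    rw [htl] at ht
    refine ⟨w, hwn, hpre, ?_, ht⟩
    intro hgd
    have hwt : w.take m = v.1.take m := take_eq_of_prefix hpre htl
    have hkey : v.1.take (m+1) <+: w := by
      have h1 : w.take (m+1) = v.1.take (m+1) := by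
        rw [take_succ_getD w m (by omega), take_succ_getD v.1 m hm, hwt, hgd]
      rw [← h1]
      exact List.take_prefix _ _
    have hne : v.1.take (m+1) ≠ [] := by
      intro h
      have := congrArg List.length h
      simp only [List.length_take, List.length_nil] at this
      omega
    have e₁ : Edg n := ⟨v.1.take (m+1), hne, le_trans (List.take_prefix _ _).length_le hLn⟩
    have htrue := ht ⟨v.1.take (m+1), hne, le_trans (List.take_prefix _ _).length_le hLn⟩
      hkey (by rw [List.length_take]; omega)
    have hfalse := hF ⟨v.1.take (m+1), hne, le_trans (List.take_prefix _ _).length_le hLn⟩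
      (List.take_prefix _ _) (by rw [List.length_take]; omega)
    rw [htrue] at hfalse
    simp at hfalse
  · rintro ⟨w, hwn, hpre, hgd, ht⟩
    refine ⟨w, hwn, hpre, fun e he hl => ?_⟩
    rw [htl] at hl
    exact ht e he hl

/-- Decomposition of the wetness event. -/
lemma xwet_iff (v : Vtx n) (ω : Edg n → Bool) :
    ω ∈ Xwet v ↔ ω ∈ Ydown v ∨ ∃ m < v.1.length, ω ∈ Fev n v.1 m ∩ Send n v.1 m := by
  constructor
  · rintro ⟨w, hwlen, hreach⟩
    obtain ⟨u, huw, huv, ht, hf⟩ := reach_struct hreach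
    have hul : u.length ≤ v.1.length := huv.length_le
    rcases Nat.eq_or_lt_of_le hul with heq | hlt
    · left
      have huveq : u = v.1 := huv.eq_of_length heq
      exact ⟨w.1, hwlen, huveq ▸ huw, fun e he hl => ht e he (by omega)⟩
    · right
      refine ⟨u.length, hlt, fun e he hl => hf e he hl, ?_⟩
      rw [← ydown_fev_send hlt ω (fun e he hl => hf e he hl)]
      have hueq : u = v.1.take u.length := List.prefix_iff_eq_take.1 huv
      refine ⟨w.1, hwlen, ?_, ?_⟩
      · show List.take u.length v.1 <+: w.1
        rw [← hueq]; exact huw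
      · intro e he hl
        rw [List.length_take] at hl
        exact ht e he (by omega)
  · intro h
    have key : ∃ u : Vtx n, u.1 <+: v.1 ∧ ω ∈ Ydown u ∧
        (∀ e : Edg n, e.1 <+: v.1 → u.1.length < e.1.length → ω e = false) := by
      rcases h with hY | ⟨m, hm, hF, hS⟩
      · refine ⟨v, List.prefix_refl _, hY, fun e he hl => ?_⟩
        have := he.length_le
        omega
      · have hY := (ydown_fev_send hm ω hF).2 hS
        refine ⟨⟨v.1.take m, le_trans (List.take_prefix _ _).length_le v.2⟩,
          List.take_prefix _ _, hY, fun e he hl => ?_⟩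
        have htl : (v.1.take m).length = m := by
          rw [List.length_take]; omega
        rw [htl] at hl
        exact hF e he hl
    obtain ⟨u, huv, ⟨w, hwn, huw, ht⟩, hf⟩ := key
    refine ⟨⟨w, hwn.le⟩, hwn, ?_⟩
    have up : Relation.ReflTransGen (TStep ω) ⟨w, hwn.le⟩
        ⟨u.1, le_trans huw.length_le hwn.le⟩ :=
      reach_up ω ⟨w, hwn.le⟩ u.1 huw ht
    have hueq : (⟨u.1, le_trans huw.length_le hwn.le⟩ : Vtx n) = u := Subtype.ext rfl
    have down : Relation.ReflTransGen (TStep ω) ⟨u.1, le_trans huv.length_le v.2⟩ v :=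
      reach_down ω v u.1 huv hf
    have hueq2 : (⟨u.1, le_trans huv.length_le v.2⟩ : Vtx n) = u := Subtype.ext rfl
    rw [hueq] at up
    rw [hueq2] at down
    exact up.trans down

lemma xwet_eq (v : Vtx n) :
    Xwet v = Ydown v ∪ ⋃ m ∈ Finset.range v.1.length, (Fev n v.1 m ∩ Send n v.1 m) := by
  ext ω
  rw [Set.mem_union]
  simp only [Set.mem_iUnion, Finset.mem_range, exists_prop]
  exact xwet_iff v ω

end Identities
section Meas1

variable {n : ℕ} {p : ℝ}

lemma coord_measure (hp0 : 0 ≤ p) (hp1 : p ≤ 1) (e : Edg n) (b : Bool) :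
    treeMeasure n p {ω : Edg n → Bool | ω e = b} =
      ENNReal.ofReal (if b then p else 1 - p) := by
  have hset : {ω : Edg n → Bool | ω e = b} =
      Set.pi Set.univ (fun e' => if e' = e then {b} else Set.univ) := by
    ext ω
    simp only [Set.mem_pi, Set.mem_univ, true_implies, Set.mem_setOf_eq]
    constructor
    · intro h e'
      by_cases he' : e' = e
      · subst he'; simp [h]
      · simp [he']
    · intro h
      have := h e
      simpa using this
  rw [show treeMeasure n p = Measure.pi (fun _ : Edg n => bern p) from rfl, hset,
    MeasureTheory.Measure.pi_pi]
  rw [Finset.prod_eq_single e (fun i _ hne => by rw [if_neg hne]; exact bern_univ hp0 hp1)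
    (fun h => absurd (Finset.mem_univ e) h)]
  simp [bern_singleton hp0 hp1]

lemma coord_depOn (e : Edg n) (b : Bool) :
    DepOn {ω : Edg n → Bool | ω e = b} {e} := by
  intro ω ω' hag h
  have := hag e rfl
  simp only [Set.mem_setOf_eq] at h ⊢
  rw [← this, h]

lemma DepOn.biInter {ι : Type*} (s : Finset ι) (E : ι → Set (Edg n → Bool))
    (C : ι → Set (Edg n)) (h : ∀ i ∈ s, DepOn (E i) (C i)) :
    DepOn (⋂ i ∈ s, E i) (⋃ i ∈ s, C i) := by
  intro ω ω' hag hω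
  simp only [Set.mem_iInter] at hω ⊢
  intro i hi
  exact h i hi (fun e he => hag e (Set.mem_biUnion hi he)) (hω i hi)

lemma prodRule_finset (hp0 : 0 ≤ p) (hp1 : p ≤ 1) {ι : Type*} (s : Finset ι)
    (E : ι → Set (Edg n → Bool)) (C : ι → Set (Edg n))
    (hdep : ∀ i ∈ s, DepOn (E i) (C i))
    (hdisj : ∀ i ∈ s, ∀ j ∈ s, i ≠ j → Disjoint (C i) (C j)) :
    treeMeasure n p (⋂ i ∈ s, E i) = ∏ i ∈ s, treeMeasure n p (E i) := by
  classical
  haveI := treeMeasure_prob (n := n) hp0 hp1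
  induction s using Finset.induction_on with
  | empty => simp
  | @insert a s ha ih =>
      rw [Finset.set_biInter_insert, Finset.prod_insert ha]
      have h1 : DepOn (⋂ i ∈ s, E i) (⋃ i ∈ s, C i) :=
        DepOn.biInter s E C (fun i hi => hdep i (Finset.mem_insert_of_mem hi))
      have h2 : Disjoint (C a) (⋃ i ∈ s, C i) := by
        rw [Set.disjoint_iUnion_right]
        intro i
        rw [Set.disjoint_iUnion_right]
        intro hi
        exact hdisj a (Finset.mem_insert_self _ _) i (Finset.mem_insert_of_mem hi)
          (fun h => ha (h ▸ hi))
      rw [prodRule hp0 hp1 (hdep a (Finset.mem_insert_self _ _)) h1 h2]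
      rw [ih (fun i hi => hdep i (Finset.mem_insert_of_mem hi))
        (fun i hi j hj hij => hdisj i (Finset.mem_insert_of_mem hi) j
          (Finset.mem_insert_of_mem hj) hij)]

lemma pr_compl (hp0 : 0 ≤ p) (hp1 : p ≤ 1) (A : Set (Edg n → Bool)) :
    (treeMeasure n p Aᶜ).toReal = 1 - (treeMeasure n p A).toReal := by
  haveI := treeMeasure_prob (n := n) hp0 hp1
  rw [MeasureTheory.prob_compl_eq_one_sub (measSet A)]
  rw [ENNReal.toReal_sub_of_le MeasureTheory.prob_le_one ENNReal.one_ne_top]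
  simp

lemma pr_inter (hp0 : 0 ≤ p) (hp1 : p ≤ 1) {A B : Set (Edg n → Bool)} {S T : Set (Edg n)}
    (hA : DepOn A S) (hB : DepOn B T) (hST : Disjoint S T) :
    (treeMeasure n p (A ∩ B)).toReal =
      (treeMeasure n p A).toReal * (treeMeasure n p B).toReal := by
  rw [prodRule hp0 hp1 hA hB hST, ENNReal.toReal_mul]

lemma pr_coord (hp0 : 0 ≤ p) (hp1 : p ≤ 1) (e : Edg n) (b : Bool) :
    (treeMeasure n p {ω : Edg n → Bool | ω e = b}).toReal = if b then p else 1 - p := by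
  rw [coord_measure hp0 hp1 e b, ENNReal.toReal_ofReal]
  split <;> linarith

end Meas1
section Meas2

variable {n : ℕ} {p : ℝ}

lemma ydown_meas (hp0 : 0 ≤ p) (hp1 : p ≤ 1) (u : Vtx n) :
    (treeMeasure n p (Ydown u)).toReal = rho p (n - u.1.length) := by
  haveI := treeMeasure_prob (n := n) hp0 hp1
  suffices H : ∀ d (u : Vtx n), n - u.1.length = d →
      (treeMeasure n p (Ydown u)).toReal = rho p (n - u.1.length) from H _ u rfl
  intro d
  induction d with
  | zero =>
      intro u hd
      have hlen : u.1.length = n := by have := u.2; omega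
      have huniv : Ydown u = Set.univ := by
        ext ω
        simp only [Set.mem_univ, iff_true]
        exact ⟨u.1, hlen, List.prefix_refl _, fun e he hl => absurd e.2.2 (by omega)⟩
      rw [huniv, hd]
      simp [rho]
  | succ d ih =>
      intro u hd
      have hlt : u.1.length < n := by omega
      set A : Bool → Set (Edg n → Bool) := fun b =>
        {ω : Edg n → Bool | ω ⟨u.1 ++ [b], by simp,
          by rw [List.length_append, List.length_singleton]; omega⟩ = true} ∩
        Ydown ⟨u.1 ++ [b], by rw [List.length_append, List.length_singleton]; omega⟩
        with hA
      have hsplit : Ydown u = A false ∪ A true := by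
        ext ω
        rw [Set.mem_union, ydown_split u hlt ω]
        constructor
        · rintro ⟨b, h1, h2⟩
          cases b
          · exact Or.inl ⟨h1, h2⟩
          · exact Or.inr ⟨h1, h2⟩
        · rintro (⟨h1, h2⟩ | ⟨h1, h2⟩)
          · exact ⟨false, h1, h2⟩
          · exact ⟨true, h1, h2⟩
      have hAdep : ∀ b, DepOn (A b) {e : Edg n | u.1 ++ [b] <+: e.1} := by
        intro b
        refine DepOn.mono ((coord_depOn _ _).inter (ydown_depOn _)) ?_
        rintro e (he | he)
        · erw [Set.mem_singleton_iff] at he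
          rw [he]
          exact List.prefix_refl _
        · exact he.1
      have hAmeas : ∀ b, (treeMeasure n p (A b)).toReal = p * rho p d := by
        intro b
        rw [hA]
        erw [pr_inter hp0 hp1 (coord_depOn _ true) (ydown_depOn _) ?_]
        · erw [pr_coord hp0 hp1]
          have hlen : (u.1 ++ [b]).length = u.1.length + 1 := by
            rw [List.length_append, List.length_singleton]
          rw [ih ⟨u.1 ++ [b], by omega⟩ (by simp only [hlen]; omega)]
          simp only [hlen]
          rw [show n - (u.1.length + 1) = d from by omega]
          simp
        · rw [Set.disjoint_left]
          rintro e he ⟨hpre, hne⟩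
          erw [Set.mem_singleton_iff] at he
          exact hne (by rw [he])
      have hDdisj : Disjoint {e : Edg n | u.1 ++ [false] <+: e.1}
          {e : Edg n | u.1 ++ [true] <+: e.1} := by
        rw [Set.disjoint_left]
        intro e h1 h2
        simp only [Set.mem_setOf_eq] at h1 h2
        have : u.1 ++ [false] = u.1 ++ [true] := prefix_eq_of_length h1 h2 (by simp)
        simp at this
      have hcompl : (treeMeasure n p ((A false ∪ A true)ᶜ)).toReal =
          (1 - p * rho p d) * (1 - p * rho p d) := by
        rw [Set.compl_union]
        rw [pr_inter hp0 hp1 (hAdep false).compl (hAdep true).compl hDdisj]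
        rw [pr_compl hp0 hp1, pr_compl hp0 hp1, hAmeas false, hAmeas true]
      have hpr : (treeMeasure n p (Ydown u)).toReal =
          1 - (1 - p * rho p d) * (1 - p * rho p d) := by
        have := pr_compl hp0 hp1 (A false ∪ A true)
        rw [hcompl] at this
        rw [hsplit]
        linarith
      rw [hpr, hd]
      show _ = rho p (d + 1)
      simp only [rho]
      ring

lemma send_meas (hp0 : 0 ≤ p) (hp1 : p ≤ 1) {L : List Bool} {m : ℕ}
    (hm : m < L.length) (hLn : L.length ≤ n) :
    (treeMeasure n p (Send n L m)).toReal = p * rho p (n - m - 1) := by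
  have hset : Send n L m =
      {ω : Edg n → Bool | ω ⟨sib L m, sib_ne_nil, by rw [sib_length hm]; omega⟩ = true} ∩
      Ydown ⟨sib L m, by rw [sib_length hm]; omega⟩ :=
    Set.ext (send_iff hm hLn)
  rw [hset]
  erw [pr_inter hp0 hp1 (coord_depOn _ true) (ydown_depOn _) ?_]
  · erw [pr_coord hp0 hp1, ydown_meas hp0 hp1]
    simp only [sib_length hm]
    rw [show n - (m + 1) = n - m - 1 from by omega]
    simp
  · rw [Set.disjoint_left]
    rintro e he ⟨hpre, hne⟩
    erw [Set.mem_singleton_iff] at he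
    exact hne (by rw [he])

lemma fev_meas (hp0 : 0 ≤ p) (hp1 : p ≤ 1) {L : List Bool} (hLn : L.length ≤ n) (m : ℕ) :
    (treeMeasure n p (Fev n L m)).toReal = (1 - p) ^ (L.length - m) := by
  haveI := treeMeasure_prob (n := n) hp0 hp1
  suffices H : ∀ d m, L.length - m = d →
      (treeMeasure n p (Fev n L m)).toReal = (1 - p) ^ (L.length - m) from H _ m rfl
  intro d
  induction d with
  | zero =>
      intro m hd
      rw [fev_univ (by omega), hd]
      simp
  | succ d ih =>
      intro m hd
      have hm : m < L.length := by omega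
      rw [fev_split hm hLn]
      erw [pr_inter hp0 hp1 (coord_depOn _ false) fev_depOn ?_]
      · erw [pr_coord hp0 hp1, ih (m+1) (by omega)]
        rw [show L.length - m = (L.length - (m+1)) + 1 from by omega, pow_succ]
        simp only [if_neg (Bool.false_ne_true)]
        ring
      · rw [Set.disjoint_left]
        rintro e he ⟨hpre, hlen⟩
        erw [Set.mem_singleton_iff] at he
        rw [he] at hlen
        simp only [List.length_take] at hlen
        omega

end Meas2
section Meas3

variable {n : ℕ} {p : ℝ}

lemma DepOn.biUnion {ι : Type*} (s : Finset ι) (E : ι → Set (Edg n → Bool))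
    (C : ι → Set (Edg n)) (h : ∀ i ∈ s, DepOn (E i) (C i)) :
    DepOn (⋃ i ∈ s, E i) (⋃ i ∈ s, C i) := by
  intro ω ω' hag hω
  simp only [Set.mem_iUnion] at hω ⊢
  obtain ⟨i, hi, hωi⟩ := hω
  exact ⟨i, hi, h i hi (fun e he => hag e (Set.mem_biUnion hi he)) hωi⟩

lemma gev_meas (hp0 : 0 ≤ p) (hp1 : p ≤ 1) {L : List Bool} {m : ℕ}
    (hm : m < L.length) (hLn : L.length ≤ n) :
    (treeMeasure n p (Gev n L m)).toReal =
      (1 - p) ^ (L.length - m) * (p * rho p (n - m - 1)) *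
        ∏ j ∈ Finset.Ico (m+1) L.length, (1 - p * rho p (n - j - 1)) := by
  haveI := treeMeasure_prob (n := n) hp0 hp1
  have hjlt : ∀ j ∈ Finset.Ico (m+1) L.length, j < L.length := by
    intro j hj
    exact (Finset.mem_Ico.1 hj).2
  have hIdep : DepOn (⋂ j ∈ Finset.Ico (m+1) L.length, (Send n L j)ᶜ)
      (⋃ j ∈ Finset.Ico (m+1) L.length, cS n L j) :=
    DepOn.biInter _ _ _ (fun j hj => (send_depOn (hjlt j hj) hLn).compl)
  have hImeas : (treeMeasure n p (⋂ j ∈ Finset.Ico (m+1) L.length, (Send n L j)ᶜ)).toReal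
      = ∏ j ∈ Finset.Ico (m+1) L.length, (1 - p * rho p (n - j - 1)) := by
    rw [prodRule_finset hp0 hp1 _ _ (fun j => cS n L j)
      (fun j hj => (send_depOn (hjlt j hj) hLn).compl)
      (fun i hi j hj hij => cS_disj (hjlt i hi) (hjlt j hj) hij)]
    rw [ENNReal.toReal_prod]
    refine Finset.prod_congr rfl (fun j hj => ?_)
    rw [pr_compl hp0 hp1, send_meas hp0 hp1 (hjlt j hj) hLn]
  have hFS : (treeMeasure n p (Fev n L m ∩ Send n L m)).toReal =
      (1 - p) ^ (L.length - m) * (p * rho p (n - m - 1)) := by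
    rw [pr_inter hp0 hp1 fev_depOn (send_depOn hm hLn) (cF_cS_disj hm)]
    rw [fev_meas hp0 hp1 hLn, send_meas hp0 hp1 hm hLn]
  rw [Gev, pr_inter hp0 hp1 (fev_depOn.inter (send_depOn hm hLn)) hIdep ?_, hFS, hImeas]
  rw [Set.disjoint_iUnion_right]
  intro j
  rw [Set.disjoint_iUnion_right]
  intro hj
  rw [Set.disjoint_union_left]
  exact ⟨cF_cS_disj (hjlt j hj), cS_disj hm (hjlt j hj) (by
    have := (Finset.mem_Ico.1 hj).1; omega)⟩

lemma b_eq_g {L : List Bool} :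
    (⋃ m ∈ Finset.range L.length, (Fev n L m ∩ Send n L m)) =
      ⋃ m ∈ Finset.range L.length, Gev n L m := by
  ext ω
  simp only [Set.mem_iUnion, Finset.mem_range, exists_prop]
  constructor
  · rintro ⟨m, hm, hF, hS⟩
    set s : Finset ℕ := (Finset.Ico m L.length).filter (fun j => ω ∈ Send n L j) with hs
    have hne : s.Nonempty := ⟨m, by
      rw [hs, Finset.mem_filter, Finset.mem_Ico]
      exact ⟨⟨le_refl m, hm⟩, hS⟩⟩
    set M := s.max' hne with hM
    have hMs : M ∈ s := s.max'_mem hne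
    rw [hs, Finset.mem_filter, Finset.mem_Ico] at hMs
    refine ⟨M, hMs.1.2, ⟨fev_mono hMs.1.1 hF, hMs.2⟩, ?_⟩
    simp only [Set.mem_iInter, Set.mem_compl_iff]
    intro j hj
    rw [Finset.mem_Ico] at hj
    intro hSj
    have hjs : j ∈ s := by
      rw [hs, Finset.mem_filter, Finset.mem_Ico]
      exact ⟨⟨by omega, hj.2⟩, hSj⟩
    have := s.le_max' j hjs
    omega
  · rintro ⟨m, hm, hG⟩
    exact ⟨m, hm, hG.1⟩

lemma g_pairwise_disjoint {L : List Bool} :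
    ∀ i ∈ Finset.range L.length, ∀ j ∈ Finset.range L.length, i ≠ j →
      Disjoint (Gev n L i) (Gev n L j) := by
  have key : ∀ i j, i < j → j < L.length → Disjoint (Gev n L i) (Gev n L j) := by
    intro i j hij hj
    rw [Set.disjoint_left]
    intro ω hωi hωj
    have h1 : ω ∈ (Send n L j)ᶜ := by
      have := hωi.2
      simp only [Set.mem_iInter] at this
      exact this j (by rw [Finset.mem_Ico]; omega)
    exact h1 hωj.1.2
  intro i hi j hj hij
  rw [Finset.mem_range] at hi hj
  rcases Nat.lt_or_ge i j with h | h
  · exact key i j h hj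
  · exact (key j i (by omega) hi).symm

lemma b_meas (hp0 : 0 ≤ p) (hp1 : p ≤ 1) {L : List Bool} (hLn : L.length ≤ n) :
    (treeMeasure n p (⋃ m ∈ Finset.range L.length, (Fev n L m ∩ Send n L m))).toReal =
      ∑ m ∈ Finset.range L.length, ((1 - p) ^ (L.length - m) * (p * rho p (n - m - 1)) *
        ∏ j ∈ Finset.Ico (m+1) L.length, (1 - p * rho p (n - j - 1))) := by
  haveI := treeMeasure_prob (n := n) hp0 hp1
  rw [b_eq_g]
  rw [MeasureTheory.measure_biUnion_finset ?_ (fun m _ => measSet _)]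
  · rw [ENNReal.toReal_sum (fun m _ => MeasureTheory.measure_ne_top _ _)]
    refine Finset.sum_congr rfl (fun m hm => ?_)
    rw [Finset.mem_range] at hm
    exact gev_meas hp0 hp1 hm hLn
  · intro i hi j hj hij
    exact g_pairwise_disjoint i hi j hj hij

end Meas3
section Final

variable {n : ℕ} {p : ℝ}

lemma sum_to_alpha {L : List Bool} (hLn : L.length ≤ n) :
    ∑ m ∈ Finset.range L.length, ((1 - p) ^ (L.length - m) * (p * rho p (n - m - 1)) *
        ∏ j ∈ Finset.Ico (m+1) L.length, (1 - p * rho p (n - j - 1))) =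
      alpha p n (n - L.length) := by
  set N := L.length with hN
  set k := n - N with hk
  have hprod : ∀ i, i < N →
      ∏ j ∈ Finset.Ico (N - i) N, (1 - p * rho p (n - j - 1)) =
        ∏ j ∈ Finset.range i, (1 - p * rho p (k + j)) := by
    intro i hi
    rw [Finset.prod_Ico_eq_prod_range]
    rw [show N - (N - i) = i from by omega]
    rw [← Finset.prod_range_reflect (fun j => 1 - p * rho p (k + j)) i]
    refine Finset.prod_congr rfl (fun t ht => ?_)
    rw [Finset.mem_range] at ht
    have : n - (N - i + t) - 1 = k + (i - 1 - t) := by omega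
    rw [this]
  rw [← Finset.sum_range_reflect]
  rw [alpha, show n - (n - N) = N from by omega, Finset.mul_sum]
  refine Finset.sum_congr rfl (fun i hi => ?_)
  rw [Finset.mem_range] at hi
  have h1 : N - 1 - i + 1 = N - i := by omega
  have h2 : N - (N - 1 - i) = i + 1 := by omega
  have h3 : n - (N - 1 - i) - 1 = k + i := by omega
  rw [h1, h2, h3, hprod i hi, pow_succ]
  ring

end Final

/-- **Probability that a vertex gets wet.**  For a vertex `v` of level
`k = n - |v|`, `P(X_v) = ρ_k + (1 - ρ_k) α^{(n)}_k`. -/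
theorem prob_vertex_wet (n : ℕ) (p : ℝ) (hp0 : 0 ≤ p) (hp1 : p ≤ 1) (v : Vtx n) :
    (treeMeasure n p (Xwet v)).toReal =
      rho p (n - v.1.length) +
        (1 - rho p (n - v.1.length)) * alpha p n (n - v.1.length) := by
  classical
  haveI := treeMeasure_prob (n := n) hp0 hp1
  have hLn : v.1.length ≤ n := v.2
  set B := ⋃ m ∈ Finset.range v.1.length, (Fev n v.1 m ∩ Send n v.1 m) with hB
  have hX : Xwet v = Ydown v ∪ B := xwet_eq v
  have hBdep : DepOn B (⋃ m ∈ Finset.range v.1.length, (cF n v.1 m ∪ cS n v.1 m)) :=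
    DepOn.biUnion _ _ _
      (fun m hm => fev_depOn.inter (send_depOn (Finset.mem_range.1 hm) hLn))
  have hdisj : Disjoint (cY n v.1)
      (⋃ m ∈ Finset.range v.1.length, (cF n v.1 m ∪ cS n v.1 m)) := by
    rw [Set.disjoint_iUnion_right]
    intro m
    rw [Set.disjoint_iUnion_right]
    intro hm
    rw [Set.disjoint_union_right]
    exact ⟨cY_cF_disj, cY_cS_disj (Finset.mem_range.1 hm)⟩
  have hPB : (treeMeasure n p B).toReal = alpha p n (n - v.1.length) := by
    rw [hB, b_meas hp0 hp1 hLn, sum_to_alpha hLn]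
  have hcompl : (treeMeasure n p (Xwet v)ᶜ).toReal =
      (1 - rho p (n - v.1.length)) * (1 - alpha p n (n - v.1.length)) := by
    rw [hX, Set.compl_union,
      pr_inter hp0 hp1 (ydown_depOn v).compl hBdep.compl hdisj,
      pr_compl hp0 hp1, pr_compl hp0 hp1, ydown_meas hp0 hp1, hPB]
  have hfin := pr_compl hp0 hp1 (Xwet v)
  rw [hcompl] at hfin
  have : (treeMeasure n p (Xwet v)).toReal =
      1 - (1 - rho p (n - v.1.length)) * (1 - alpha p n (n - v.1.length)) := by
    linarith
  rw [this]
  ring
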